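/- Let σ be a positive definite density matrix in M_n(ℂ), and let s ∈ [0,1] with s ≠ 1/2. Let K : M_n(ℂ) → M_n(ℂ) be a linear map that preserves self-adjointness (K(A*) = (K(A))* for all A) and is self-adjoint with respect to the inner product ⟨A,B⟩_s = Tr[σ^s A* σ^{1-s} B]. Then K commutes with the modular operator Δ_σ(A) = σAσ⁻¹. -/

import Mathlib

/-!
Conjugating by the involution `A ↦ Aᴴ` turns self-adjointness of `K` for `⟨·,·⟩_s` into
self-adjointness for `⟨·,·⟩_{1-s}`. Both say that the Hilbert–Schmidt adjoint of `K` is a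
conjugate of `K`, namely by `B ↦ σ^{1-s} B σ^s` and by `B ↦ σ^s B σ^{1-s}`; comparing the two, `K`
commutes with `Δ^{1-2s} : A ↦ σ^{1-2s} A σ^{2s-1}`. In an eigenbasis of `σ` the operator `Δ^t`
multiplies the matrix unit `E_ij` by `(λ_i / λ_j)^t`, and `x ↦ x^t` is injective on `[0, ∞)` for
`t ≠ 0`, so every operator commuting with `Δ^{1-2s}` commutes with all `Δ^u`, in particular with
`Δ = Δ^1`.
-/

open Matrix
open scoped ComplexOrder

/-- The real power `σ^s` of a positive definite matrix, via the functional calculus. -/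
noncomputable def mpow {n : ℕ} {σ : Matrix (Fin n) (Fin n) ℂ} (hσ : σ.PosDef) (s : ℝ) :
    Matrix (Fin n) (Fin n) ℂ :=
  hσ.1.cfc fun x => x ^ s

theorem Real.rpow_mul_rpow_neg {x y : ℝ} (hx : 0 ≤ x) (hy : 0 ≤ y) (t : ℝ) :
    x ^ t * y ^ (-t) = (x / y) ^ t := by
  rw [Real.rpow_neg hy, Real.div_rpow hx hy, div_eq_mul_inv]

namespace Matrix

section TraceSymmetric

variable {n R : Type*} [Fintype n] [CommRing R] [StarRing R]

/-- `K` is self-adjoint for the sesquilinear form `⟨A, B⟩ = Tr[X Aᴴ Y B]`. -/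
def TraceSymmetric (K : Matrix n n R →ₗ[R] Matrix n n R) (X Y : Matrix n n R) : Prop :=
  ∀ A B, (X * (K A)ᴴ * (Y * B)).trace = (X * Aᴴ * (Y * K B)).trace

namespace TraceSymmetric

variable {K : Matrix n n R →ₗ[R] Matrix n n R} {X Y : Matrix n n R}

theorem swap (hK : ∀ A, K Aᴴ = (K A)ᴴ) (h : TraceSymmetric K X Y) : TraceSymmetric K Y X := by
  intro A B
  calc (Y * (K A)ᴴ * (X * B)).trace = (X * Bᴴᴴ * (Y * K Aᴴ)).trace := by
        rw [trace_mul_comm, hK, conjTranspose_conjTranspose]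
    _ = (X * (K Bᴴ)ᴴ * (Y * Aᴴ)).trace := (h _ _).symm
    _ = (Y * Aᴴ * (X * K B)).trace := by
        rw [trace_mul_comm, hK, conjTranspose_conjTranspose]

theorem mul_map_mul_eq [DecidableEq n] (h₁ : TraceSymmetric K X Y) (h₂ : TraceSymmetric K Y X)
    {B C : Matrix n n R} (hBC : X * B * Y = Y * C * X) : X * K B * Y = Y * K C * X := by
  refine ext_iff_trace_mul_left.2 fun M => ?_
  calc (M * (X * K B * Y)).trace = (Y * Mᴴᴴ * (X * K B)).trace := by
        simp only [conjTranspose_conjTranspose, Matrix.mul_assoc]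
        rw [trace_mul_comm Y]
        simp only [Matrix.mul_assoc]
    _ = (Y * (K Mᴴ)ᴴ * (X * B)).trace := (h₂ _ _).symm
    _ = ((K Mᴴ)ᴴ * (X * B * Y)).trace := by
        simp only [Matrix.mul_assoc]
        rw [trace_mul_comm Y]
        simp only [Matrix.mul_assoc]
    _ = (X * (K Mᴴ)ᴴ * (Y * C)).trace := by
        rw [hBC]
        simp only [Matrix.mul_assoc]
        rw [trace_mul_comm X]
        simp only [Matrix.mul_assoc]
    _ = (X * Mᴴᴴ * (Y * K C)).trace := h₁ _ _
    _ = (M * (Y * K C * X)).trace := by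
        simp only [conjTranspose_conjTranspose, Matrix.mul_assoc]
        rw [trace_mul_comm X]
        simp only [Matrix.mul_assoc]

end TraceSymmetric

end TraceSymmetric

section Diagonal

variable {n R : Type*} [Fintype n] [DecidableEq n] [CommRing R]

theorem diagonal_mul_single_mul_diagonal (a b : n → R) (i j : n) (x : R) :
    diagonal a * single i j x * diagonal b = (a i * b j) • single i j x := by
  ext k l
  rw [mul_diagonal, diagonal_mul, Matrix.smul_apply, smul_eq_mul, single_apply]
  split_ifs with h
  · obtain ⟨rfl, rfl⟩ := h
    ring
  · simp

/-- The sandwich `X ↦ diagonal a * X * diagonal b` scales `single i j x` by `a i * b j`, so `L`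
commutes with it iff each entry `(k, l)` of `L (single i j x)` vanishes unless
`a k * b l = a i * b j`. -/
theorem map_diagonal_mul_mul_diagonal_of [IsDomain R] (L : Matrix n n R →ₗ[R] Matrix n n R)
    {a b c d : n → R}
    (hab : ∀ X, L (diagonal a * X * diagonal b) = diagonal a * L X * diagonal b)
    (hcd : ∀ i j k l, a k * b l = a i * b j → c k * d l = c i * d j) (X : Matrix n n R) :
    L (diagonal c * X * diagonal d) = diagonal c * L X * diagonal d := by
  induction X using Matrix.induction_on' with
  | h_zero => simp
  | h_add P Q hP hQ => simp only [mul_add, add_mul, map_add, hP, hQ]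
  | h_std_basis i j x =>
    have hE := hab (single i j x)
    rw [diagonal_mul_single_mul_diagonal, map_smul] at hE ⊢
    ext k l
    have hkl := congrFun₂ hE k l
    simp only [smul_apply, smul_eq_mul, diagonal_mul, mul_diagonal] at hkl ⊢
    by_cases h0 : L (single i j x) k l = 0
    · simp [h0]
    · have hab' : a k * b l = a i * b j := mul_right_cancel₀ h0 (by linear_combination -hkl)
      linear_combination -L (single i j x) k l * hcd i j k l hab'

end Diagonal

end Matrix

section mpow

variable {n : ℕ} {σ : Matrix (Fin n) (Fin n) ℂ} (hσ : σ.PosDef)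

theorem mpow_def (t : ℝ) : mpow hσ t = Unitary.conjStarAlgAut ℂ _ hσ.1.eigenvectorUnitary
    (diagonal fun i => ((hσ.1.eigenvalues i ^ t : ℝ) : ℂ)) := rfl

theorem mpow_mul_mpow (a b : ℝ) : mpow hσ a * mpow hσ b = mpow hσ (a + b) := by
  rw [mpow_def, mpow_def, mpow_def, ← map_mul, diagonal_mul_diagonal]
  simp only [← Complex.ofReal_mul, ← Real.rpow_add (hσ.eigenvalues_pos _)]

theorem mpow_zero : mpow hσ 0 = 1 := by
  simp [mpow_def]

theorem mpow_one : mpow hσ 1 = σ := by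
  simpa [mpow, ← IsHermitian.cfc_eq] using cfc_id' ℝ σ hσ.1.isSelfAdjoint

theorem inv_mpow (t : ℝ) : (mpow hσ t)⁻¹ = mpow hσ (-t) :=
  inv_eq_right_inv (by rw [mpow_mul_mpow, add_neg_cancel, mpow_zero])

theorem mpow_mul_mpow_mul_mul_mpow_mul_mpow (a b c d : ℝ) (M : Matrix (Fin n) (Fin n) ℂ) :
    mpow hσ a * (mpow hσ b * M * mpow hσ c) * mpow hσ d
      = mpow hσ (a + b) * M * mpow hσ (c + d) := by
  rw [← mpow_mul_mpow hσ a b, ← mpow_mul_mpow hσ c d]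
  simp only [Matrix.mul_assoc]

variable {K : Matrix (Fin n) (Fin n) ℂ →ₗ[ℂ] Matrix (Fin n) (Fin n) ℂ}

theorem map_mpow_mul_mul_mpow_neg_of_traceSymmetric (hK : ∀ A, K Aᴴ = (K A)ᴴ) {s : ℝ}
    (h : TraceSymmetric K (mpow hσ s) (mpow hσ (1 - s))) (A : Matrix (Fin n) (Fin n) ℂ) :
    K (mpow hσ (1 - 2 * s) * A * mpow hσ (-(1 - 2 * s)))
      = mpow hσ (1 - 2 * s) * K A * mpow hσ (-(1 - 2 * s)) := by
  set B := mpow hσ (1 - 2 * s) * A * mpow hσ (-(1 - 2 * s))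
  have hBA : mpow hσ s * B * mpow hσ (1 - s) = mpow hσ (1 - s) * A * mpow hσ s := by
    rw [mpow_mul_mpow_mul_mul_mpow_mul_mpow, show s + (1 - 2 * s) = 1 - s by ring,
      show -(1 - 2 * s) + (1 - s) = s by ring]
  have hKBA := h.mul_map_mul_eq (h.swap hK) hBA
  calc K B = mpow hσ (-s) * (mpow hσ s * K B * mpow hσ (1 - s)) * mpow hσ (s - 1) := by
        rw [mpow_mul_mpow_mul_mul_mpow_mul_mpow, neg_add_cancel, sub_add_sub_cancel', sub_self,
          mpow_zero, one_mul, mul_one]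
    _ = mpow hσ (1 - 2 * s) * K A * mpow hσ (-(1 - 2 * s)) := by
        rw [hKBA, mpow_mul_mpow_mul_mul_mpow_mul_mpow, show -s + (1 - s) = 1 - 2 * s by ring,
          show s + (s - 1) = -(1 - 2 * s) by ring]

theorem map_mpow_mul_mul_mpow_neg_of_ne_zero {t : ℝ} (ht : t ≠ 0)
    (hK : ∀ A, K (mpow hσ t * A * mpow hσ (-t)) = mpow hσ t * K A * mpow hσ (-t))
    (u : ℝ) (A : Matrix (Fin n) (Fin n) ℂ) :
    K (mpow hσ u * A * mpow hσ (-u)) = mpow hσ u * K A * mpow hσ (-u) := by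
  set φ := (Unitary.conjStarAlgAut ℂ _ hσ.1.eigenvectorUnitary).toAlgEquiv
  set ev := hσ.1.eigenvalues
  set D : ℝ → Matrix (Fin n) (Fin n) ℂ := fun t => diagonal fun i => ((ev i ^ t : ℝ) : ℂ)
  have hφD (t : ℝ) : φ (D t) = mpow hσ t := rfl
  let L := φ.symm.toLinearMap ∘ₗ K ∘ₗ φ.toLinearMap
  have hL (X : Matrix (Fin n) (Fin n) ℂ) : L (D t * X * D (-t)) = D t * L X * D (-t) := by
    change φ.symm (K (φ _)) = D t * φ.symm (K (φ X)) * D (-t)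
    rw [map_mul φ, map_mul φ, hφD, hφD, hK, map_mul φ.symm, map_mul φ.symm, ← hφD t, ← hφD (-t),
      AlgEquiv.symm_apply_apply, AlgEquiv.symm_apply_apply]
  have hcd (i j k l : Fin n)
      (h : ((ev k ^ t : ℝ) : ℂ) * ((ev l ^ (-t) : ℝ) : ℂ)
        = ((ev i ^ t : ℝ) : ℂ) * ((ev j ^ (-t) : ℝ) : ℂ)) :
      ((ev k ^ u : ℝ) : ℂ) * ((ev l ^ (-u) : ℝ) : ℂ)
        = ((ev i ^ u : ℝ) : ℂ) * ((ev j ^ (-u) : ℝ) : ℂ) := by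
    have hpos := hσ.eigenvalues_pos
    simp only [← Complex.ofReal_mul, Complex.ofReal_inj] at h ⊢
    rw [Real.rpow_mul_rpow_neg (hpos k).le (hpos l).le,
      Real.rpow_mul_rpow_neg (hpos i).le (hpos j).le] at h ⊢
    rw [Real.rpow_left_injOn ht (div_pos (hpos k) (hpos l)).le (div_pos (hpos i) (hpos j)).le h]
  have hLu := congrArg φ (map_diagonal_mul_mul_diagonal_of L hL hcd (φ.symm A))
  simp only [L, LinearMap.comp_apply, AlgEquiv.toLinearMap_apply, map_mul φ,
    AlgEquiv.apply_symm_apply] at hLu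
  exact hLu

end mpow

theorem selfAdjoint_s_implies_commutes_modular_general {n : ℕ}
    (σ : Matrix (Fin n) (Fin n) ℂ) (hσ : σ.PosDef)
    (s : ℝ) (hs : s ≠ 1 / 2)
    (K : Matrix (Fin n) (Fin n) ℂ →ₗ[ℂ] Matrix (Fin n) (Fin n) ℂ)
    (hstar : ∀ A, K Aᴴ = (K A)ᴴ)
    (hsa : ∀ A B : Matrix (Fin n) (Fin n) ℂ,
      (mpow hσ s * (K A)ᴴ * (mpow hσ (1 - s) * B)).trace
        = (mpow hσ s * Aᴴ * (mpow hσ (1 - s) * K B)).trace) :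
    ∀ A, K (σ * A * σ⁻¹) = σ * K A * σ⁻¹ := by
  intro A
  have hΔt := map_mpow_mul_mul_mpow_neg_of_traceSymmetric hσ hstar (s := s) hsa
  have ht : 1 - 2 * s ≠ 0 := fun h => hs (by linarith)
  have hΔ := map_mpow_mul_mul_mpow_neg_of_ne_zero hσ ht hΔt 1 A
  rwa [← inv_mpow, mpow_one] at hΔ

/-- A self-adjointness preserving linear map that is self-adjoint with respect to
`⟨A,B⟩_s = Tr[σ^s A* σ^{1-s} B]` for some `s ∈ [0,1]`, `s ≠ 1/2`, commutes with the
modular operator `Δ_σ(A) = σ A σ⁻¹`. -/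
theorem selfAdjoint_s_implies_commutes_modular {n : ℕ}
    (σ : Matrix (Fin n) (Fin n) ℂ) (hσ : σ.PosDef) (hTr : σ.trace = 1)
    (s : ℝ) (hs0 : 0 ≤ s) (hs1 : s ≤ 1) (hs : s ≠ 1 / 2)
    (K : Matrix (Fin n) (Fin n) ℂ →ₗ[ℂ] Matrix (Fin n) (Fin n) ℂ)
    (hstar : ∀ A, K Aᴴ = (K A)ᴴ)
    (hsa : ∀ A B : Matrix (Fin n) (Fin n) ℂ,
      (mpow hσ s * (K A)ᴴ * (mpow hσ (1 - s) * B)).trace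
        = (mpow hσ s * Aᴴ * (mpow hσ (1 - s) * K B)).trace) :
    ∀ A, K (σ * A * σ⁻¹) = σ * K A * σ⁻¹ :=
  selfAdjoint_s_implies_commutes_modular_general σ hσ s hs K hstar hsa
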